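/- Let K = (X, (→_a)_{a∈Σ}, ρ) be a Kripke structure over Σ, let A = {(i,j) ∈ ℕ×ℕ : j ≤ i}, and let (x_{i,j})_{(i,j)∈A} be worlds of X such that for every r ∈ ℕ: (x_{2r,0}, x_{2r+1,0}) ∈ [[d a₂ b₁]]; (x_{2r,s}, x_{2r,s−1}) ∈ [[a₁ b₂]] for all 1 ≤ s ≤ 2r; (x_{2r+1,2r+1}, x_{2r+2,2r+2}) ∈ [[c a₁ b₂]]; and (x_{2r+1,s}, x_{2r+1,s+1}) ∈ [[a₂ b₁]] for all 0 ≤ s ≤ 2r. Then for all r ∈ ℕ: (x_{2r,s}, x_{2r+1,s}) ∈ [[L₀↔]] and (x_{2r,s}, x_{2r+1,s+1}) ∈ [[L₀↕]] for all 0 ≤ s ≤ 2r, and (x_{2r+1,s}, x_{2r+2,s}) ∈ [[L₁↔]] and (x_{2r+1,s}, x_{2r+2,s+1}) ∈ [[L₁↕]] for all 0 ≤ s ≤ 2r+1. -/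

import Mathlib

/-- The six-letter alphabet `Σ = {a₁, a₂, b₁, b₂, c, d}`. -/
inductive Letter where
  | a1 | a2 | b1 | b2 | c | d
deriving DecidableEq

instance instFintypeLetter : Fintype Letter :=
  ⟨{.a1, .a2, .b1, .b2, .c, .d}, fun x => by cases x <;> simp⟩

/-- `w^i`: the `i`-fold concatenation of the word `w`. -/
def wpow (w : List Letter) (i : ℕ) : List Letter :=
  (List.replicate i w).flatten

/-- Given a Kripke structure with transition relations `R a` for each letter `a`, the
relation `[[w]]` of a word `w`: the relational composition of the `R a` along `w`
(the identity for the empty word). -/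
def wordRel {X : Type} (R : Letter → X → X → Prop) : List Letter → X → X → Prop
  | [] => fun x y => x = y
  | a :: w => fun x z => ∃ y, R a x y ∧ wordRel R w y z


/-- `L₀↔ = {(a₁b₂)^t d (a₂b₁)^{t+1} : t ≥ 0}`. -/
def L0ew : Set (List Letter) :=
  {w | ∃ t : ℕ, w = wpow [.a1, .b2] t ++ [.d] ++ wpow [.a2, .b1] (t + 1)}

/-- `L₁↔ = {(a₂b₁)^t c (a₁b₂)^{t+2} : t ≥ 0}`. -/
def L1ew : Set (List Letter) :=
  {w | ∃ t : ℕ, w = wpow [.a2, .b1] t ++ [.c] ++ wpow [.a1, .b2] (t + 2)}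

/-- `L₀↕ = {(a₁b₂)^t d (a₂b₁)^{t+2} : t ≥ 0}`. -/
def L0ns : Set (List Letter) :=
  {w | ∃ t : ℕ, w = wpow [.a1, .b2] t ++ [.d] ++ wpow [.a2, .b1] (t + 2)}

/-- `L₁↕ = {(a₂b₁)^t c (a₁b₂)^{t+1} : t ≥ 0}`. -/
def L1ns : Set (List Letter) :=
  {w | ∃ t : ℕ, w = wpow [.a2, .b1] t ++ [.c] ++ wpow [.a1, .b2] (t + 1)}

/-! Every grid world reaches its neighbours in the next row along the snake: walk along its
row to the end where the snake turns (down to column `0` by `a₁b₂`-steps in an even row, up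
to the diagonal by `a₂b₁`-steps in an odd row), take the turning edge `d a₂ b₁` resp.
`c a₁ b₂`, and walk back along the next row. The step counts on the two sides of the turn
differ by exactly the offset prescribed by the language. -/

theorem wpow_succ (w : List Letter) (k : ℕ) : wpow w (k + 1) = w ++ wpow w k := by
  simp [wpow, List.replicate_succ]

theorem wpow_succ' (w : List Letter) (k : ℕ) : wpow w (k + 1) = wpow w k ++ w := by
  simp [wpow, List.replicate_succ']

section WordRel

variable {X : Type} {R : Letter → X → X → Prop}

theorem wordRel_append {u v : List Letter} {x y z : X} (hu : wordRel R u x y)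
    (hv : wordRel R v y z) : wordRel R (u ++ v) x z := by
  induction u generalizing x with
  | nil => exact hu ▸ hv
  | cons a u ih =>
    obtain ⟨m, hxm, hmy⟩ := hu
    exact ⟨m, hxm, ih hmy⟩

theorem wordRel_wpow_of_forall_lt {w : List Letter} (f : ℕ → X) (k : ℕ)
    (h : ∀ i < k, wordRel R w (f i) (f (i + 1))) : wordRel R (wpow w k) (f 0) (f k) := by
  induction k with
  | zero => rfl
  | succ k ih =>
    rw [wpow_succ']
    exact wordRel_append (ih fun i hi => h i (by omega)) (h k k.lt_succ_self)

theorem wordRel_wpow_append_cons_wpow {u v : List Letter} {ℓ : Letter} {t k : ℕ}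
    {x y y' z : X} (hu : wordRel R (wpow u t) x y) (hℓ : wordRel R (ℓ :: v) y y')
    (hv : wordRel R (wpow v k) y' z) : wordRel R (wpow u t ++ [ℓ] ++ wpow v (k + 1)) x z := by
  rw [List.append_assoc, wpow_succ]
  exact wordRel_append hu (wordRel_append (u := ℓ :: v) hℓ hv)

end WordRel

section Snake

variable {X : Type} {R : Letter → X → X → Prop} {x : ℕ → ℕ → X}

theorem wordRel_descend_even_row
    (h2 : ∀ r s : ℕ, 1 ≤ s → s ≤ 2 * r →
      wordRel R [.a1, .b2] (x (2 * r) s) (x (2 * r) (s - 1)))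
    {r i j k : ℕ} (hi : i ≤ 2 * r) (hk : j + k = i) :
    wordRel R (wpow [.a1, .b2] k) (x (2 * r) i) (x (2 * r) j) := by
  have key := wordRel_wpow_of_forall_lt (fun n => x (2 * r) (i - n)) k fun n hn => by
    simpa only [Nat.sub_sub] using h2 r (i - n) (by omega) (by omega)
  simpa only [Nat.sub_zero, show i - k = j by omega] using key

theorem wordRel_ascend_odd_row
    (h4 : ∀ r s : ℕ, s ≤ 2 * r →
      wordRel R [.a2, .b1] (x (2 * r + 1) s) (x (2 * r + 1) (s + 1)))
    {r i j k : ℕ} (hj : j ≤ 2 * r + 1) (hk : i + k = j) :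
    wordRel R (wpow [.a2, .b1] k) (x (2 * r + 1) i) (x (2 * r + 1) j) := by
  subst hk
  exact wordRel_wpow_of_forall_lt (fun n => x (2 * r + 1) (i + n)) k fun n hn =>
    h4 r (i + n) (by omega)

end Snake

theorem grid_connections_general {X : Type} (R : Letter → X → X → Prop)
    (x : ℕ → ℕ → X)
    (h1 : ∀ r : ℕ, wordRel R [.d, .a2, .b1] (x (2 * r) 0) (x (2 * r + 1) 0))
    (h2 : ∀ r s : ℕ, 1 ≤ s → s ≤ 2 * r →
      wordRel R [.a1, .b2] (x (2 * r) s) (x (2 * r) (s - 1)))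
    (h3 : ∀ r : ℕ, wordRel R [.c, .a1, .b2]
      (x (2 * r + 1) (2 * r + 1)) (x (2 * r + 2) (2 * r + 2)))
    (h4 : ∀ r s : ℕ, s ≤ 2 * r →
      wordRel R [.a2, .b1] (x (2 * r + 1) s) (x (2 * r + 1) (s + 1))) :
    ∀ r : ℕ,
      (∀ s : ℕ, s ≤ 2 * r →
        (∃ w ∈ L0ew, wordRel R w (x (2 * r) s) (x (2 * r + 1) s)) ∧
        (∃ w ∈ L0ns, wordRel R w (x (2 * r) s) (x (2 * r + 1) (s + 1)))) ∧
      (∀ s : ℕ, s ≤ 2 * r + 1 →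
        (∃ w ∈ L1ew, wordRel R w (x (2 * r + 1) s) (x (2 * r + 2) s)) ∧
        (∃ w ∈ L1ns, wordRel R w (x (2 * r + 1) s) (x (2 * r + 2) (s + 1)))) := by
  intro r
  refine ⟨fun s hs => ⟨⟨_, ⟨s, rfl⟩, ?_⟩, ⟨_, ⟨s, rfl⟩, ?_⟩⟩,
    fun s hs => ⟨⟨_, ⟨2 * r + 1 - s, rfl⟩, ?_⟩, ⟨_, ⟨2 * r + 1 - s, rfl⟩, ?_⟩⟩⟩
  · exact wordRel_wpow_append_cons_wpow (wordRel_descend_even_row h2 hs (zero_add s)) (h1 r)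
      (wordRel_ascend_odd_row h4 (by omega) (zero_add s))
  · exact wordRel_wpow_append_cons_wpow (wordRel_descend_even_row h2 hs (zero_add s)) (h1 r)
      (wordRel_ascend_odd_row h4 (by omega) (zero_add (s + 1)))
  · exact wordRel_wpow_append_cons_wpow (wordRel_ascend_odd_row h4 le_rfl (by omega)) (h3 r)
      (wordRel_descend_even_row (r := r + 1) h2 (by omega) (by omega))
  · exact wordRel_wpow_append_cons_wpow (wordRel_ascend_odd_row h4 le_rfl (by omega)) (h3 r)
      (wordRel_descend_even_row (r := r + 1) h2 (by omega) (by omega))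

/-- Given a grid of worlds `x i j` (for `(i,j)` with `j ≤ i`) connected as in the snake
(Figure 4), horizontally adjacent grid worlds are connected by `[[L₀↔]]` resp. `[[L₁↔]]`
and vertically adjacent ones by `[[L₀↕]]` resp. `[[L₁↕]]`. -/
theorem grid_connections {X : Type} (R : Letter → X → X → Prop)
    {P : Type} (ρ : X → Set P) (x : ℕ → ℕ → X)
    (h1 : ∀ r : ℕ, wordRel R [.d, .a2, .b1] (x (2 * r) 0) (x (2 * r + 1) 0))
    (h2 : ∀ r s : ℕ, 1 ≤ s → s ≤ 2 * r →
      wordRel R [.a1, .b2] (x (2 * r) s) (x (2 * r) (s - 1)))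
    (h3 : ∀ r : ℕ, wordRel R [.c, .a1, .b2]
      (x (2 * r + 1) (2 * r + 1)) (x (2 * r + 2) (2 * r + 2)))
    (h4 : ∀ r s : ℕ, s ≤ 2 * r →
      wordRel R [.a2, .b1] (x (2 * r + 1) s) (x (2 * r + 1) (s + 1))) :
    ∀ r : ℕ,
      (∀ s : ℕ, s ≤ 2 * r →
        (∃ w ∈ L0ew, wordRel R w (x (2 * r) s) (x (2 * r + 1) s)) ∧
        (∃ w ∈ L0ns, wordRel R w (x (2 * r) s) (x (2 * r + 1) (s + 1)))) ∧
      (∀ s : ℕ, s ≤ 2 * r + 1 →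
        (∃ w ∈ L1ew, wordRel R w (x (2 * r + 1) s) (x (2 * r + 2) s)) ∧
        (∃ w ∈ L1ns, wordRel R w (x (2 * r + 1) s) (x (2 * r + 2) (s + 1)))) :=
  grid_connections_general R x h1 h2 h3 h4
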